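/- For all natural numbers n, g, X with 1 ≤ g ≤ n and 1 ≤ X, one has C(n+X, X)·C(n, g) + (g−1)·C(g+X−1, X−1)·C(n+X, g+X) + (X−1)·C(g+X−1, X)·C(n+X, g+X) = 2g·C(g+X−1, X−1)·C(n+X, g+X). -/

import Mathlib

/-!
Both sides carry the factor `C(n+X, g+X)`, once `C(n+X, X) C(n, g)` is rewritten as
`C(n+X, g+X) C(g+X, X)`. Dividing it out, Pascal's rule splits `C(g+X, X)` and the left side
becomes `g C(g+X-1, X-1) + X C(g+X-1, X)`; the absorption identity `X C(g+X-1, X) = g C(g+X-1, X-1)`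
turns this into `2g C(g+X-1, X-1)`.
-/

theorem Nat.add_choose_mul_choose (n g X : ℕ) :
    (n + X).choose X * n.choose g = (n + X).choose (g + X) * (g + X).choose X := by
  rw [Nat.choose_mul (Nat.le_add_left X g), Nat.add_sub_cancel, Nat.add_sub_cancel]

theorem Nat.succ_add_choose_succ_weighted_sum (g X : ℕ) :
    (g + 1 + (X + 1)).choose (X + 1) + g * (g + 1 + X).choose X
      + X * (g + 1 + X).choose (X + 1) = 2 * (g + 1) * (g + 1 + X).choose X := by
  have pascal : (g + 1 + (X + 1)).choose (X + 1)
      = (g + 1 + X).choose X + (g + 1 + X).choose (X + 1) := Nat.choose_succ_succ' _ _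
  have absorb : (g + 1 + X).choose (X + 1) * (X + 1) = (g + 1 + X).choose X * (g + 1) := by
    rw [Nat.choose_succ_right_eq, Nat.add_sub_cancel]
  rw [pascal]
  linear_combination absorb

theorem stmt6_general (n g X : ℕ) (hg : 1 ≤ g) (hX : 1 ≤ X) :
    (n + X).choose X * n.choose g
      + (g - 1) * ((g + X - 1).choose (X - 1) * (n + X).choose (g + X))
      + (X - 1) * ((g + X - 1).choose X * (n + X).choose (g + X)) =
    2 * g * ((g + X - 1).choose (X - 1) * (n + X).choose (g + X)) := by
  obtain ⟨g, rfl⟩ : ∃ g', g = g' + 1 := ⟨g - 1, by omega⟩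
  obtain ⟨X, rfl⟩ : ∃ X', X = X' + 1 := ⟨X - 1, by omega⟩
  have hm : g + 1 + (X + 1) - 1 = g + 1 + X := by omega
  simp only [hm, Nat.add_sub_cancel, Nat.add_choose_mul_choose]
  linear_combination
    (n + (X + 1)).choose (g + 1 + (X + 1)) * Nat.succ_add_choose_succ_weighted_sum g X

theorem stmt6 (n g X : ℕ) (hg : 1 ≤ g) (hgn : g ≤ n) (hX : 1 ≤ X) :
    (n + X).choose X * n.choose g
      + (g - 1) * ((g + X - 1).choose (X - 1) * (n + X).choose (g + X))
      + (X - 1) * ((g + X - 1).choose X * (n + X).choose (g + X)) =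
    2 * g * ((g + X - 1).choose (X - 1) * (n + X).choose (g + X)) :=
  stmt6_general n g X hg hX
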